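/- Fix d ≥ 1. Let f_Y : [0,∞) → [0,∞) be defined by f_Y(y) = 2/3 for 0 ≤ y ≤ 1 and f_Y(y) = (2/3)·y^{−3} for y ≥ 1, and for a > 0 define P(a) := ∫_0^∞ f_Y(y)·( (2π)^{−d/2} ∫_{{z ∈ ℝ^d : √y·‖z‖ ≤ a}} exp(−‖z‖²/2) dz ) dy. Then there exists a constant C > 0 (depending only on d) such that for all a ∈ (0,1), P(a) ≤ C·a^{2d/(d+2)}. -/

import Mathlib

/-!
For `y > 0` the inner factor of `P(a)` is the standard Gaussian mass of the ball of radius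
`r = a/√y`, which is at most `min(1, c·r^d) ≤ (c·r^d)^θ` for every `θ ∈ [0,1]`. With
`θ = 2/(d+2)` this is `c^θ·a^{2d/(d+2)}·y^{-d/(d+2)}`, and `y^{-d/(d+2)}` is integrable against
`f_Y` because `d/(d+2) < 1` near `0` and `f_Y` decays like `y⁻³` near `∞`.
-/

open MeasureTheory Metric ENNReal

/-- The density `f_Y(y) = 2/3` on `[0,1]` and `(2/3)·y⁻³` on `[1,∞)`. -/
noncomputable def fY (y : ℝ) : ℝ := if y ≤ 1 then 2 / 3 else (2 / 3) * (y ^ 3)⁻¹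

/-- `P(a) = ∫_0^∞ f_Y(y) · ((2π)^{-d/2} ∫_{√y‖z‖ ≤ a} e^{-‖z‖²/2} dz) dy`,
the probability that `√Y·|Z| ≤ a` for a standard `d`-dimensional Gaussian `Z`
independent of `Y`. -/
noncomputable def Pa (d : ℕ) (a : ℝ) : ℝ≥0∞ :=
  ∫⁻ y in Set.Ioi (0 : ℝ),
    ENNReal.ofReal (fY y) *
      (ENNReal.ofReal ((2 * Real.pi) ^ (-(d : ℝ) / 2)) *
        ∫⁻ z in {z : EuclideanSpace ℝ (Fin d) | Real.sqrt y * ‖z‖ ≤ a},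
          ENNReal.ofReal (Real.exp (-‖z‖ ^ 2 / 2)))

open Real Set Module

lemma fY_nonneg (y : ℝ) : 0 ≤ fY y := by
  unfold fY
  split_ifs with hy
  · norm_num
  · have : 0 < y := by linarith
    positivity

lemma integrableOn_fY_mul_rpow_neg {s : ℝ} (hs₀ : -2 < s) (hs₁ : s < 1) :
    IntegrableOn (fun y => fY y * y ^ (-s)) (Ioi 0) := by
  rw [← Ioc_union_Ioi_eq_Ioi zero_le_one, integrableOn_union,
    integrableOn_Ioc_iff_integrableOn_Ioo]
  constructor
  · have hpow : IntegrableOn (fun y : ℝ => 2 / 3 * y ^ (-s)) (Ioo 0 1) :=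
      ((intervalIntegral.integrableOn_Ioo_rpow_iff one_pos).mpr (by linarith)).const_mul _
    refine hpow.congr_fun (fun y hy => ?_) measurableSet_Ioo
    simp only [fY, if_pos hy.2.le]
  · have hpow : IntegrableOn (fun y : ℝ => 2 / 3 * y ^ (-3 - s)) (Ioi 1) :=
      (integrableOn_Ioi_rpow_of_lt (by linarith) one_pos).const_mul _
    refine hpow.congr_fun (fun y (hy : 1 < y) => ?_) measurableSet_Ioi
    have hy₀ : 0 < y := by linarith
    show 2 / 3 * y ^ (-3 - s) = _
    rw [fY, if_neg hy.not_ge, sub_eq_add_neg, rpow_add hy₀, rpow_neg hy₀.le,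
      show (3 : ℝ) = (3 : ℕ) by norm_num, Real.rpow_natCast, mul_assoc]

lemma ENNReal.le_rpow_of_le_one_of_le {q A : ℝ≥0∞} {θ : ℝ} (hq : q ≤ 1) (hqA : q ≤ A)
    (hθ₀ : 0 ≤ θ) (hθ₁ : θ ≤ 1) : q ≤ A ^ θ :=
  calc q = q ^ (1 : ℝ) := (rpow_one q).symm
    _ ≤ q ^ θ := rpow_le_rpow_of_exponent_ge hq hθ₁
    _ ≤ A ^ θ := rpow_le_rpow hqA hθ₀

section Gaussian

variable {E : Type*} [NormedAddCommGroup E] [InnerProductSpace ℝ E] [FiniteDimensional ℝ E]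
  [MeasurableSpace E] [BorelSpace E]

variable (E) in
lemma lintegral_exp_neg_norm_sq_div_two :
    ∫⁻ z : E, ENNReal.ofReal (exp (-‖z‖ ^ 2 / 2))
      = ENNReal.ofReal ((2 * π) ^ ((finrank ℝ E : ℝ) / 2)) := by
  have hexp : (fun z : E => exp (-‖z‖ ^ 2 / 2)) = fun z => exp (-(1 / 2) * ‖z‖ ^ 2) := by
    ext z; ring_nf
  have hval : ∫ z : E, exp (-‖z‖ ^ 2 / 2) = (2 * π) ^ ((finrank ℝ E : ℝ) / 2) := by
    rw [hexp, GaussianFourier.integral_rexp_neg_mul_sq_norm (by norm_num)]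
    norm_num [div_div_eq_mul_div, mul_comm]
  have hint : Integrable fun z : E => exp (-‖z‖ ^ 2 / 2) :=
    .of_integral_ne_zero (by rw [hval]; positivity)
  rw [← ofReal_integral_eq_lintegral_ofReal hint (.of_forall fun z => (exp_pos _).le), hval]

noncomputable def gaussianMass (s : Set E) : ℝ≥0∞ :=
  ENNReal.ofReal ((2 * π) ^ (-(finrank ℝ E : ℝ) / 2)) *
    ∫⁻ z in s, ENNReal.ofReal (exp (-‖z‖ ^ 2 / 2))

lemma gaussianMass_le_one (s : Set E) : gaussianMass s ≤ 1 := by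
  have h2π : 0 < 2 * π := by positivity
  calc gaussianMass s
      ≤ ENNReal.ofReal ((2 * π) ^ (-(finrank ℝ E : ℝ) / 2)) *
          ENNReal.ofReal ((2 * π) ^ ((finrank ℝ E : ℝ) / 2)) := by
        rw [gaussianMass, ← lintegral_exp_neg_norm_sq_div_two E]
        gcongr
        exact Measure.restrict_le_self
    _ = 1 := by
        rw [← ENNReal.ofReal_mul (by positivity), ← rpow_add h2π, neg_div, neg_add_cancel,
          Real.rpow_zero, ENNReal.ofReal_one]

lemma gaussianMass_le_volume (s : Set E) :
    gaussianMass s ≤ ENNReal.ofReal ((2 * π) ^ (-(finrank ℝ E : ℝ) / 2)) * volume s := by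
  rw [gaussianMass, ← setLIntegral_one]
  gcongr with z
  rw [ENNReal.ofReal_le_one, exp_le_one_iff]
  have := sq_nonneg ‖z‖
  linarith

lemma exists_gaussianMass_closedBall_le [Nontrivial E] :
    ∃ c ≥ 0, ∀ r ≥ 0,
      gaussianMass (closedBall (0 : E) r) ≤ ENNReal.ofReal (c * r ^ finrank ℝ E) := by
  refine ⟨(2 * π) ^ (-(finrank ℝ E : ℝ) / 2) *
      (√π ^ finrank ℝ E / Gamma (finrank ℝ E / 2 + 1)), by positivity, fun r hr => ?_⟩
  calc _ ≤ _ := gaussianMass_le_volume _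
    _ = _ := by
      rw [InnerProductSpace.volume_closedBall, ← ENNReal.ofReal_pow hr,
        ← ENNReal.ofReal_mul (by positivity), ← ENNReal.ofReal_mul (by positivity)]
      ring_nf

end Gaussian

lemma setOf_sqrt_mul_norm_le_eq_closedBall {F : Type*} [SeminormedAddCommGroup F] {y : ℝ}
    (hy : 0 < y) (a : ℝ) : {z : F | √y * ‖z‖ ≤ a} = closedBall 0 (a / √y) := by
  ext z
  rw [mem_closedBall_zero_iff, le_div_iff₀ (sqrt_pos.mpr hy), mul_comm]
  rfl

lemma exists_gaussianMass_sqrt_mul_norm_le {E : Type*} [NormedAddCommGroup E]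
    [InnerProductSpace ℝ E] [FiniteDimensional ℝ E] [MeasurableSpace E] [BorelSpace E]
    [Nontrivial E] {θ : ℝ} (hθ₀ : 0 ≤ θ) (hθ₁ : θ ≤ 1) :
    ∃ c ≥ 0, ∀ y > 0, ∀ a ≥ 0, gaussianMass {z : E | √y * ‖z‖ ≤ a}
      ≤ ENNReal.ofReal (c * a ^ (finrank ℝ E * θ) * y ^ (-(finrank ℝ E * θ / 2))) := by
  obtain ⟨c, hc, hball⟩ := exists_gaussianMass_closedBall_le (E := E)
  refine ⟨c ^ θ, by positivity, fun y hy a ha => ?_⟩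
  have hr : 0 ≤ a / √y := by positivity
  rw [setOf_sqrt_mul_norm_le_eq_closedBall hy]
  calc _ ≤ ENNReal.ofReal (c * (a / √y) ^ finrank ℝ E) ^ θ :=
        ENNReal.le_rpow_of_le_one_of_le (gaussianMass_le_one _) (hball _ hr) hθ₀ hθ₁
    _ = _ := by
      rw [ENNReal.ofReal_rpow_of_nonneg (by positivity) hθ₀, mul_rpow hc (by positivity),
        ← Real.rpow_natCast, ← Real.rpow_mul hr, div_rpow ha (sqrt_nonneg y), sqrt_eq_rpow,
        ← Real.rpow_mul hy.le, div_eq_mul_inv, ← Real.rpow_neg hy.le]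
      ring_nf

lemma Pa_eq_lintegral_gaussianMass (d : ℕ) (a : ℝ) :
    Pa d a = ∫⁻ y in Ioi 0, ENNReal.ofReal (fY y) *
      gaussianMass {z : EuclideanSpace ℝ (Fin d) | √y * ‖z‖ ≤ a} := by
  simp only [Pa, gaussianMass, finrank_euclideanSpace_fin]

lemma Pa_le_mul_integral {d : ℕ} {a b s : ℝ} (hb : 0 ≤ b)
    (hint : IntegrableOn (fun y => fY y * y ^ (-s)) (Ioi 0))
    (hmass : ∀ y > 0, gaussianMass {z : EuclideanSpace ℝ (Fin d) | √y * ‖z‖ ≤ a}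
      ≤ ENNReal.ofReal (b * y ^ (-s))) :
    Pa d a ≤ ENNReal.ofReal (b * ∫ y in Ioi 0, fY y * y ^ (-s)) := by
  have hnonneg : ∀ y ∈ Ioi (0 : ℝ), 0 ≤ fY y * y ^ (-s) := fun y hy =>
    mul_nonneg (fY_nonneg y) (rpow_nonneg (le_of_lt hy) _)
  calc Pa d a
      ≤ ∫⁻ y in Ioi 0, ENNReal.ofReal b * ENNReal.ofReal (fY y * y ^ (-s)) := by
        rw [Pa_eq_lintegral_gaussianMass]
        refine setLIntegral_mono' measurableSet_Ioi fun y hy => ?_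
        grw [hmass y hy, ← ENNReal.ofReal_mul (fY_nonneg y), ← ENNReal.ofReal_mul hb,
          mul_left_comm]
    _ = ENNReal.ofReal (b * ∫ y in Ioi 0, fY y * y ^ (-s)) := by
        rw [lintegral_const_mul' _ _ ofReal_ne_top, ← ofReal_integral_eq_lintegral_ofReal hint
          (ae_restrict_of_forall_mem measurableSet_Ioi hnonneg), ← ENNReal.ofReal_mul hb]

theorem stmt9 (d : ℕ) (hd : 1 ≤ d) :
    ∃ C : ℝ, 0 < C ∧ ∀ a : ℝ, 0 < a → a < 1 →
      Pa d a ≤ ENNReal.ofReal (C * a ^ (2 * (d : ℝ) / ((d : ℝ) + 2))) := by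
  have : Nonempty (Fin d) := ⟨⟨0, hd⟩⟩
  set θ : ℝ := 2 / ((d : ℝ) + 2)
  have hθ₁ : θ ≤ 1 := by
    rw [div_le_one (by positivity)]; linarith [(d.cast_nonneg : (0 : ℝ) ≤ d)]
  obtain ⟨c, hc, hmass⟩ :=
    exists_gaussianMass_sqrt_mul_norm_le (E := EuclideanSpace ℝ (Fin d)) (by positivity) hθ₁
  rw [finrank_euclideanSpace_fin] at hmass
  set s : ℝ := d * θ / 2
  have hs₁ : s < 1 := by
    rw [show s = d / (d + 2) by ring, div_lt_one (by positivity)]; linarith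
  have hint := integrableOn_fY_mul_rpow_neg (by linarith [show 0 ≤ s by positivity]) hs₁
  set K := ∫ y in Ioi 0, fY y * y ^ (-s)
  have hK : 0 ≤ K := setIntegral_nonneg measurableSet_Ioi fun y (hy : 0 < y) =>
    mul_nonneg (fY_nonneg y) (rpow_nonneg hy.le _)
  refine ⟨c * K + 1, by positivity, fun a ha _ => ?_⟩
  have hae : 0 ≤ a ^ ((d : ℝ) * θ) := by positivity
  calc Pa d a ≤ ENNReal.ofReal (c * a ^ ((d : ℝ) * θ) * K) :=
        Pa_le_mul_integral (by positivity) hint fun y hy => hmass y hy a ha.le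
    _ ≤ _ := by
        refine ENNReal.ofReal_le_ofReal ?_
        rw [show (d : ℝ) * θ = 2 * d / (d + 2) by ring] at hae ⊢
        nlinarith [mul_nonneg hc hK]
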